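/- If x is not Pareto critical and g is the minimal-norm element of the convex hull of the gradients at x (so g ≠ 0), then -g is a common descent direction: ∇f_j(x)ᵀ(-g) < 0 for all j, and consequently there exists t₀ > 0 such that f_j(x + t(-g)) < f_j(x) for all j ∈ {1,...,m} and all t ∈ (0, t₀]. -/

import Mathlib

/-!
Since `g` is the point of least norm of the convex hull `K` of the gradients, the variational
inequality of the projection of `0` onto `K` gives `‖g‖² ≤ ⟪∇f_j(x), g⟫` for every `j`; hence
`⟪∇f_j(x), -g⟫ ≤ -‖g‖² < 0`. A negative directional derivative makes each `f_j` decrease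
strictly along `-g` for all small `t > 0`, and finitely many such neighbourhoods intersect.
-/

open Filter Set Topology InnerProductSpace

section MinNorm

variable {F : Type*} [NormedAddCommGroup F] [InnerProductSpace ℝ F]

theorem norm_sq_le_real_inner_of_isMinOn_norm {K : Set F} (hK : Convex ℝ K) {g : F}
    (hg : g ∈ K) (hmin : IsMinOn (‖·‖) K g) {w : F} (hw : w ∈ K) :
    ‖g‖ ^ 2 ≤ ⟪w, g⟫_ℝ := by
  have hproj := (norm_eq_iInf_iff_real_inner_le_zero hK (u := 0) hg).1
    (by simpa using (hmin.iInf_eq hg).symm) w hw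
  rw [zero_sub, inner_neg_left, inner_sub_right, real_inner_self_eq_norm_sq,
    real_inner_comm] at hproj
  linarith

theorem norm_sq_le_real_inner_of_isMinOn_stdSimplex {ι : Type*} [Fintype ι] (v : ι → F)
    {lam : ι → ℝ} (hlam : lam ∈ stdSimplex ℝ ι)
    (hmin : IsMinOn (fun mu : ι → ℝ => ‖∑ i, mu i • v i‖) (stdSimplex ℝ ι) lam) (j : ι) :
    ‖∑ i, lam i • v i‖ ^ 2 ≤ ⟪v j, ∑ i, lam i • v i⟫_ℝ := by
  classical
  set L := Fintype.linearCombination ℝ v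
  have hL (mu : ι → ℝ) : L mu = ∑ i, mu i • v i := Fintype.linearCombination_apply ℝ v mu
  have hvj : v j = L (Pi.single j 1) := by
    rw [Fintype.linearCombination_apply_single, one_smul]
  rw [← hL, hvj]
  refine norm_sq_le_real_inner_of_isMinOn_norm ((convex_stdSimplex ℝ ι).linear_image L)
    (mem_image_of_mem L hlam) ?_ (mem_image_of_mem L (single_mem_stdSimplex ℝ j))
  rintro _ ⟨mu, hmu, rfl⟩
  show ‖L lam‖ ≤ ‖L mu‖
  rw [hL, hL]
  exact hmin hmu

end MinNorm

theorem HasDerivWithinAt.eventually_lt_of_neg {φ : ℝ → ℝ} {φ' a : ℝ}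
    (h : HasDerivWithinAt φ φ' (Ioi a) a) (hφ' : φ' < 0) :
    ∀ᶠ t in 𝓝[>] a, φ t < φ a := by
  have hslope := ((hasDerivWithinAt_iff_tendsto_slope' (lt_irrefl a)).1 h).eventually_lt_const hφ'
  filter_upwards [hslope, self_mem_nhdsWithin] with t hneg (hat : a < t)
  rw [slope_def_field, div_neg_iff] at hneg
  rcases hneg with ⟨-, hlt⟩ | ⟨hlt, -⟩ <;> linarith

theorem HasFDerivAt.eventually_lt_of_apply_neg {E : Type*} [NormedAddCommGroup E]
    [NormedSpace ℝ E] {f : E → ℝ} {f' : E →L[ℝ] ℝ} {x : E} (hf : HasFDerivAt f f' x) {d : E}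
    (hd : f' d < 0) : ∀ᶠ t in 𝓝[>] (0 : ℝ), f (x + t • d) < f x := by
  have hline : HasDerivAt (fun t : ℝ => x + t • d) d 0 := by
    simpa using ((hasDerivAt_id (0 : ℝ)).smul_const d).const_add x
  have hf0 : HasFDerivAt f f' (x + (0 : ℝ) • d) := by simpa using hf
  have hcomp := hf0.comp_hasDerivAt 0 hline
  simpa using hcomp.hasDerivWithinAt.eventually_lt_of_neg hd

/-- if `x` is not Pareto critical and `g ≠ 0` is the minimal-norm convex
combination of the gradients, then `-g` is a common descent direction. -/
theorem stmt8 {n m : ℕ} (f : Fin m → EuclideanSpace ℝ (Fin n) → ℝ)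
    (G : Fin m → EuclideanSpace ℝ (Fin n)) (x : EuclideanSpace ℝ (Fin n))
    (hgrad : ∀ j, HasGradientAt (f j) (G j) x)
    (lam : Fin m → ℝ) (hpos : ∀ j, 0 ≤ lam j) (hsum : ∑ j, lam j = 1)
    (hminim : ∀ mu : Fin m → ℝ, (∀ j, 0 ≤ mu j) → ∑ j, mu j = 1 →
      ‖∑ j, lam j • G j‖ ^ 2 ≤ ‖∑ j, mu j • G j‖ ^ 2)
    (g : EuclideanSpace ℝ (Fin n)) (hg : g = ∑ j, lam j • G j) (hgne : g ≠ 0) :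
    (∀ j, (inner ℝ (G j) (-g) : ℝ) < 0) ∧
    ∃ t₀ : ℝ, 0 < t₀ ∧ ∀ t : ℝ, 0 < t → t ≤ t₀ → ∀ j, f j (x + t • (-g)) < f j x := by
  have hmin : IsMinOn (fun mu : Fin m → ℝ => ‖∑ i, mu i • G i‖) (stdSimplex ℝ (Fin m)) lam :=
    fun mu ⟨hmu, hmu1⟩ => (sq_le_sq₀ (norm_nonneg _) (norm_nonneg _)).1 (hminim mu hmu hmu1)
  have hdesc (j : Fin m) : ⟪G j, -g⟫_ℝ < 0 := by
    have hkey := norm_sq_le_real_inner_of_isMinOn_stdSimplex G ⟨hpos, hsum⟩ hmin j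
    rw [← hg] at hkey
    rw [inner_neg_right]
    linarith [pow_pos (norm_pos_iff.2 hgne) 2]
  have hev : ∀ᶠ t in 𝓝[>] (0 : ℝ), ∀ j, f j (x + t • -g) < f j x :=
    eventually_all.2 fun j =>
      (hgrad j).hasFDerivAt.eventually_lt_of_apply_neg (by simpa using hdesc j)
  obtain ⟨t₀, ht₀, hsub⟩ := mem_nhdsGT_iff_exists_Ioc_subset.1 hev
  exact ⟨hdesc, t₀, ht₀, fun t ht htt₀ => hsub ⟨ht, htt₀⟩⟩
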